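/- arXiv:2601.02866 — 2 statements merged into one kernel-verified Lean document; each statement's English description precedes it below -/
import Mathlib

section
/- With p_n(x) = (−1)^n e^x A^n(e^{−x}), the recurrence p_{n+1}(x) = −x·Σ_{k=0}^{n} C(2n+1, 2k)·p_k(x) holds for every n ≥ 0, where C(m,j) denotes the binomial coefficient. -/
open Real

/-- The operator `(A f)(x) = x² f(x) − x (x f′(x))′`. -/
noncomputable def opA (f : ℝ → ℝ) : ℝ → ℝ :=
  fun x => x^2 * f x - x * deriv (fun y => y * deriv f y) x

/-- `p_n(x) = (−1)^n e^x (Aⁿ e^{−x})(x)`. -/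
noncomputable def p (n : ℕ) (x : ℝ) : ℝ :=
  (-1:ℝ)^n * Real.exp x * (opA^[n] (fun y => Real.exp (-y))) x

/-!
Write `p_n(x) = B_n(-x)`. Conjugating `A` by `e^{-x}` and `x ↦ -x` turns `A` into minus the
second-order operator `B ↦ yB + (y + 2y²)B' + y²B''`, so that `B_0 = 1` and `B_{n+1}` is this
operator applied to `B_n`. The coefficient `S(n, m)` of `y^m` in `B_n` is then identified with the
`(2n)`-th derivative at `0` of `E_m = (cosh t - 1)^m / m!`, i.e. with the number of partitions of a
`2n`-set into `m` blocks of even size: from `E_{m+1}' = sinh · E_m` and `cosh² - sinh² = 1` one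
gets `E_{m+1}'' = (m+1)² E_{m+1} + (2m+1) E_m`, which is exactly the recurrence the operator
imposes on `S(n, m)`. Differentiating `E_{m+1}` only once instead and expanding
`(sinh · E_m)^{(2n+1)}` by Leibniz's rule, where the derivatives of `sinh` at `0` are `1` in odd
and `0` in even order, gives `S(n+1, m+1) = ∑_k C(2n+1, 2k) S(k, m)`, i.e.
`B_{n+1} = y ∑_k C(2n+1, 2k) B_k`.
-/

open Finset

theorem Derivation.iterate_map_mul {R A : Type*} [CommSemiring R] [CommSemiring A] [Algebra R A]
    (D : Derivation R A A) (n : ℕ) (a b : A) :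
    D^[n] (a * b) = ∑ ij ∈ antidiagonal n, n.choose ij.1 • (D^[ij.1] a * D^[ij.2] b) := by
  induction n with
  | zero => simp
  | succ n ih =>
    rw [sum_antidiagonal_choose_succ_nsmul (fun i j => D^[i] a * D^[j] b) n]
    simp only [Function.iterate_succ_apply', ih, map_sum, map_nsmul, Derivation.leibniz,
      smul_eq_mul, smul_add, sum_add_distrib]
    refine congrArg _ (sum_congr rfl fun ⟨i, j⟩ hij => ?_)
    rw [n.choose_symm_of_eq_add (mem_antidiagonal.1 hij).symm, mul_comm]

theorem Finset.sum_range_two_mul_add_two_ite_even {M : Type*} [AddCommMonoid M] (f : ℕ → M)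
    (n : ℕ) :
    ∑ i ∈ range (2 * n + 2), (if Even i then f i else 0) =
      ∑ k ∈ range (n + 1), f (2 * k) := by
  induction n with
  | zero => simp [sum_range_succ]
  | succ n ih =>
    rw [show 2 * (n + 1) + 2 = 2 * n + 2 + 1 + 1 by ring, sum_range_succ, sum_range_succ, ih,
      sum_range_succ, if_pos (by exact ⟨n + 1, by ring⟩),
      if_neg (by rw [Nat.not_even_iff_odd]; exact ⟨n + 1, by ring⟩)]
    simp [sum_range_succ, mul_add]

section EvenStirling

open PowerSeries
open scoped Nat

noncomputable def coshSeries : ℝ⟦X⟧ := (2⁻¹ : ℝ) • (exp ℝ + evalNegHom (exp ℝ))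

noncomputable def sinhSeries : ℝ⟦X⟧ := (2⁻¹ : ℝ) • (exp ℝ - evalNegHom (exp ℝ))

theorem derivative_evalNegHom_exp : d⁄dX ℝ (evalNegHom (exp ℝ)) = -evalNegHom (exp ℝ) := by
  have h := congrArg (d⁄dX ℝ) (exp_mul_exp_neg_eq_one (A := ℝ))
  rw [Derivation.leibniz, derivative_exp, derivative_one, smul_eq_mul, smul_eq_mul] at h
  linear_combination evalNegHom (exp ℝ) * h -
    (d⁄dX ℝ (evalNegHom (exp ℝ)) + evalNegHom (exp ℝ)) * exp_mul_exp_neg_eq_one (A := ℝ)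

theorem derivative_coshSeries : d⁄dX ℝ coshSeries = sinhSeries := by
  rw [coshSeries, sinhSeries, Derivation.map_smul, map_add, derivative_exp,
    derivative_evalNegHom_exp, sub_eq_add_neg]

theorem derivative_sinhSeries : d⁄dX ℝ sinhSeries = coshSeries := by
  rw [coshSeries, sinhSeries, Derivation.map_smul, map_sub, derivative_exp,
    derivative_evalNegHom_exp, sub_neg_eq_add]

theorem constantCoeff_evalNegHom_exp : constantCoeff (evalNegHom (exp ℝ)) = 1 := by
  simpa [constantCoeff_exp] using congrArg constantCoeff (exp_mul_exp_neg_eq_one (A := ℝ))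

theorem constantCoeff_coshSeries : constantCoeff coshSeries = 1 := by
  norm_num [coshSeries, constantCoeff_exp, constantCoeff_evalNegHom_exp]

theorem constantCoeff_sinhSeries : constantCoeff sinhSeries = 0 := by
  simp [sinhSeries, constantCoeff_exp, constantCoeff_evalNegHom_exp]

theorem sinhSeries_sq : sinhSeries ^ 2 = coshSeries ^ 2 - 1 := by
  have half : C (2⁻¹ : ℝ) * 2 = 1 := by rw [← map_ofNat C 2, ← map_mul]; norm_num
  rw [coshSeries, sinhSeries, smul_eq_C_mul, smul_eq_C_mul]
  linear_combination
    -4 * C (2⁻¹ : ℝ) ^ 2 * exp_mul_exp_neg_eq_one (A := ℝ) - (2 * C (2⁻¹ : ℝ) + 1) * half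

noncomputable def evenPartitionEGF (m : ℕ) : ℝ⟦X⟧ := (m ! : ℝ)⁻¹ • (coshSeries - 1) ^ m

theorem evenPartitionEGF_zero : evenPartitionEGF 0 = 1 := by
  simp [evenPartitionEGF]

theorem constantCoeff_evenPartitionEGF (m : ℕ) :
    constantCoeff (evenPartitionEGF m) = if m = 0 then 1 else 0 := by
  split_ifs with hm
  · simp [hm, evenPartitionEGF_zero]
  · simp [evenPartitionEGF, constantCoeff_coshSeries, hm]

theorem coshSeries_sub_one_mul_evenPartitionEGF (m : ℕ) :
    (coshSeries - 1) * evenPartitionEGF m = (m + 1) • evenPartitionEGF (m + 1) := by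
  rw [evenPartitionEGF, evenPartitionEGF, ← Nat.cast_smul_eq_nsmul ℝ, smul_smul, mul_smul_comm,
    pow_succ', Nat.factorial_succ, Nat.cast_mul, mul_inv, ← mul_assoc, Nat.cast_succ,
    mul_inv_cancel₀ (by positivity), one_mul]

theorem derivative_evenPartitionEGF_succ (m : ℕ) :
    d⁄dX ℝ (evenPartitionEGF (m + 1)) = sinhSeries * evenPartitionEGF m := by
  rw [evenPartitionEGF, evenPartitionEGF, Derivation.map_smul, Derivation.leibniz_pow, map_sub,
    derivative_coshSeries, Derivation.map_one_eq_zero, sub_zero, Nat.add_sub_cancel, smul_eq_mul,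
    ← Nat.cast_smul_eq_nsmul ℝ, smul_smul, mul_comm sinhSeries, smul_mul_assoc]
  congr 1
  rw [Nat.factorial_succ]
  push_cast
  field_simp

theorem derivative_sinhSeries_mul_evenPartitionEGF (m : ℕ) :
    d⁄dX ℝ (sinhSeries * evenPartitionEGF m) =
      (m + 1) ^ 2 • evenPartitionEGF (m + 1) + (2 * m + 1) • evenPartitionEGF m := by
  have shift (k : ℕ) :
      (coshSeries - 1) * evenPartitionEGF k = (k + 1) * evenPartitionEGF (k + 1) := by
    rw [coshSeries_sub_one_mul_evenPartitionEGF, nsmul_eq_mul, Nat.cast_succ]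
  rw [Derivation.leibniz, derivative_sinhSeries, smul_eq_mul, smul_eq_mul, nsmul_eq_mul,
    nsmul_eq_mul]
  push_cast
  cases m with
  | zero =>
    rw [evenPartitionEGF_zero, Derivation.map_one_eq_zero]
    linear_combination (norm := (rw [evenPartitionEGF_zero]; ring)) shift 0
  | succ m =>
    rw [derivative_evenPartitionEGF_succ]
    linear_combination (norm := (push_cast; ring))
      evenPartitionEGF m * sinhSeries_sq + (coshSeries + 1) * shift m +
        ((m : ℝ⟦X⟧) + 2) * shift (m + 1)

theorem constantCoeff_iterate_derivative_sinhSeries (j : ℕ) :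
    constantCoeff ((d⁄dX ℝ)^[j] sinhSeries) = if Even j then 0 else 1 := by
  have two : (d⁄dX ℝ)^[2] sinhSeries = sinhSeries := by
    simp [derivative_sinhSeries, derivative_coshSeries]
  obtain ⟨k, rfl | rfl⟩ := j.even_or_odd'
  · rw [Function.iterate_mul, Function.iterate_fixed two, if_pos (even_two_mul k),
      constantCoeff_sinhSeries]
  · rw [Function.iterate_succ_apply', Function.iterate_mul, Function.iterate_fixed two,
      if_neg (Nat.not_even_two_mul_add_one k), derivative_sinhSeries, constantCoeff_coshSeries]

noncomputable def evenStirling (n m : ℕ) : ℝ :=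
  constantCoeff ((d⁄dX ℝ)^[2 * n] (evenPartitionEGF m))

theorem evenStirling_zero (m : ℕ) : evenStirling 0 m = if m = 0 then 1 else 0 :=
  constantCoeff_evenPartitionEGF m

theorem evenStirling_succ_zero (n : ℕ) : evenStirling (n + 1) 0 = 0 := by
  rw [evenStirling, evenPartitionEGF_zero, mul_add_one, Function.iterate_add_apply,
    Function.iterate_succ_apply, Derivation.map_one_eq_zero, iterate_map_zero, iterate_map_zero,
    map_zero]

theorem evenStirling_succ_succ (n m : ℕ) :
    evenStirling (n + 1) (m + 1) =
      (2 * m + 1) * evenStirling n m + (m + 1) ^ 2 * evenStirling n (m + 1) := by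
  have second_derivative : (d⁄dX ℝ)^[2] (evenPartitionEGF (m + 1)) =
      (m + 1) ^ 2 • evenPartitionEGF (m + 1) + (2 * m + 1) • evenPartitionEGF m := by
    rw [Function.iterate_succ_apply, Function.iterate_one, derivative_evenPartitionEGF_succ,
      derivative_sinhSeries_mul_evenPartitionEGF]
  rw [evenStirling, mul_add_one, Function.iterate_add_apply, second_derivative, iterate_map_add,
    iterate_map_nsmul, iterate_map_nsmul, map_add, map_nsmul, map_nsmul, nsmul_eq_mul,
    nsmul_eq_mul, ← evenStirling, ← evenStirling]
  push_cast
  ring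

theorem evenStirling_succ_succ_eq_sum (n m : ℕ) :
    evenStirling (n + 1) (m + 1) =
      ∑ k ∈ range (n + 1), ((2 * n + 1).choose (2 * k) : ℝ) * evenStirling k m := by
  rw [evenStirling, show 2 * (n + 1) = 2 * n + 1 + 1 by ring, Function.iterate_succ_apply,
    derivative_evenPartitionEGF_succ, mul_comm sinhSeries, Derivation.iterate_map_mul, map_sum,
    Nat.sum_antidiagonal_eq_sum_range_succ
      (fun i j => constantCoeff ((2 * n + 1).choose i •
        ((d⁄dX ℝ)^[i] (evenPartitionEGF m) * (d⁄dX ℝ)^[j] sinhSeries)))]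
  refine (sum_congr rfl fun i hi => ?_).trans (sum_range_two_mul_add_two_ite_even
    (fun i => ((2 * n + 1).choose i : ℝ) * constantCoeff ((d⁄dX ℝ)^[i] (evenPartitionEGF m)))
    n)
  have hi : i ≤ 2 * n + 1 := Nat.lt_succ_iff.mp (mem_range.mp hi)
  simp only [map_mul, constantCoeff_iterate_derivative_sinhSeries, nsmul_eq_mul,
    Nat.even_sub hi, Nat.even_add_one, even_two_mul]
  split_ifs <;> simp_all

end EvenStirling

section EvenBell

open Polynomial

theorem Polynomial.coeff_X_mul_derivative {R : Type*} [Semiring R] (q : R[X]) (m : ℕ) :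
    (X * derivative q).coeff m = q.coeff m * m := by
  cases m with
  | zero => simp
  | succ m => rw [coeff_X_mul, coeff_derivative, Nat.cast_succ]

noncomputable def evenBell : ℕ → ℝ[X]
  | 0 => 1
  | n + 1 => X * evenBell n + (X + 2 * X ^ 2) * derivative (evenBell n) +
      X ^ 2 * derivative (derivative (evenBell n))

theorem coeff_evenBell (n m : ℕ) : (evenBell n).coeff m = evenStirling n m := by
  induction n generalizing m with
  | zero => rw [evenBell, coeff_one, evenStirling_zero]
  | succ n ih =>
    set q := evenBell n
    have euler_form : evenBell (n + 1) =
        X * (q + 2 * (X * derivative q)) + X * derivative (X * derivative q) := by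
      simp only [evenBell, q, derivative_mul, derivative_X]
      ring
    cases m with
    | zero =>
      rw [euler_form, coeff_add, coeff_X_mul_zero, coeff_X_mul_zero, add_zero,
        evenStirling_succ_zero]
    | succ m =>
      rw [euler_form, coeff_add, coeff_X_mul, coeff_X_mul_derivative, coeff_X_mul_derivative,
        coeff_add, coeff_ofNat_mul, coeff_X_mul_derivative, ih, ih, evenStirling_succ_succ]
      push_cast
      ring

theorem evenBell_succ_eq_sum (n : ℕ) :
    evenBell (n + 1) =
      X * ∑ k ∈ range (n + 1), ((2 * n + 1).choose (2 * k) : ℝ[X]) * evenBell k := by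
  ext m
  cases m with
  | zero => rw [coeff_X_mul_zero, coeff_evenBell, evenStirling_succ_zero]
  | succ m =>
    simp only [coeff_X_mul, finsetSum_coeff, coeff_natCast_mul, coeff_evenBell,
      evenStirling_succ_succ_eq_sum]

end EvenBell

section ExpNegPoly

open Polynomial

noncomputable def expNegPoly (q : ℝ[X]) (x : ℝ) : ℝ := exp (-x) * q.eval (-x)

theorem hasDerivAt_expNegPoly (q : ℝ[X]) (x : ℝ) :
    HasDerivAt (expNegPoly q) (-expNegPoly (q + derivative q) x) x := by
  refine ((hasDerivAt_neg x).exp.mul ((q.hasDerivAt (-x)).comp x (hasDerivAt_neg x))).congr_deriv ?_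
  simp only [expNegPoly, eval_add, Function.comp_apply]
  ring

theorem deriv_expNegPoly (q : ℝ[X]) : deriv (expNegPoly q) = -expNegPoly (q + derivative q) :=
  funext fun x => (hasDerivAt_expNegPoly q x).deriv

theorem mul_expNegPoly (q : ℝ[X]) (x : ℝ) : x * expNegPoly q x = -expNegPoly (X * q) x := by
  simp only [expNegPoly, eval_mul, eval_X]
  ring

theorem opA_expNegPoly (q : ℝ[X]) :
    opA (expNegPoly q) = -expNegPoly (X * q + (X + 2 * X ^ 2) * derivative q +
      X ^ 2 * derivative (derivative q)) := by
  have inner : (fun y => y * deriv (expNegPoly q) y) = expNegPoly (X * (q + derivative q)) := by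
    funext y
    rw [deriv_expNegPoly, Pi.neg_apply, mul_neg, mul_expNegPoly, neg_neg]
  funext x
  rw [opA, inner, deriv_expNegPoly]
  simp only [expNegPoly, Pi.neg_apply, eval_add, eval_mul, eval_pow, eval_X, eval_one, eval_ofNat,
    derivative_add, derivative_mul, derivative_X]
  ring

theorem opA_const_mul (c : ℝ) (f : ℝ → ℝ) :
    opA (fun x => c * f x) = fun x => c * opA f x := by
  have inner : (fun y => y * deriv (fun x => c * f x) y) = fun y => c * (y * deriv f y) := by
    funext y
    rw [deriv_const_mul_field', mul_left_comm]
  funext x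
  rw [opA, opA, inner, deriv_const_mul_field']
  ring

theorem iterate_opA_exp_neg (n : ℕ) :
    opA^[n] (fun x => exp (-x)) = fun x => (-1) ^ n * expNegPoly (evenBell n) x := by
  induction n with
  | zero =>
    funext x
    simp [evenBell, expNegPoly]
  | succ n ih =>
    rw [Function.iterate_succ_apply', ih, opA_const_mul, opA_expNegPoly]
    funext x
    rw [evenBell, Pi.neg_apply, pow_succ]
    ring

theorem p_eq_eval_evenBell (n : ℕ) (x : ℝ) : p n x = (evenBell n).eval (-x) := by
  have sign : ((-1 : ℝ) ^ n) ^ 2 = 1 := by rw [← pow_mul, Even.neg_one_pow ⟨n, by ring⟩]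
  have cancel : exp x * exp (-x) = 1 := by rw [← exp_add, add_neg_cancel, exp_zero]
  simp only [p, iterate_opA_exp_neg, expNegPoly]
  linear_combination (exp x * exp (-x) * (evenBell n).eval (-x)) * sign +
    (evenBell n).eval (-x) * cancel

end ExpNegPoly

theorem p_sum_recurrence (n : ℕ) (x : ℝ) :
    p (n+1) x = -x * ∑ k ∈ Finset.range (n+1),
      ((2*n+1).choose (2*k) : ℝ) * p k x := by
  simp only [p_eq_eval_evenBell, evenBell_succ_eq_sum, Polynomial.eval_mul, Polynomial.eval_X,
    Polynomial.eval_finsetSum, Polynomial.eval_natCast]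
end

section
/- For x > 0, the moments μ_n(x) = ∫_0^∞ τ^{2n}·(K_{iτ}(x))² dτ satisfy x·μ_0′(x) = −4·μ_1(x). -/
open MeasureTheory Real

/-- Macdonald function of purely imaginary order `iτ`. -/
noncomputable def Kit (τ x : ℝ) : ℝ :=
  ∫ t in Set.Ioi (0:ℝ), Real.exp (-x * Real.cosh t) * Real.cos (τ * t)

/-- Moments of the square of the Macdonald function. -/
noncomputable def μ (n : ℕ) (x : ℝ) : ℝ :=
  ∫ τ in Set.Ioi (0:ℝ), τ^(2*n) * (Kit τ x)^2

/-!
For `x > 0` put `g_x t = exp (-x cosh t)`, so that `Kit · x` is the cosine transform of `g_x` on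
`(0, ∞)`. Integrating by parts twice gives `τ² Kit τ x = -(cosine transform of g_x'')`, hence
`Kit · x = O(τ⁻²)` is integrable and cosine (Fourier) inversion applies. The resulting Parseval
identity turns the moments into `t`-integrals: `μ 0 x = π/2 ∫ g_{2x}` and
`μ 1 x = -π/2 ∫ g_x'' g_x`. Differentiating the first under the integral sign and using
`∫ g_{2x}'' = 0` (the same integration by parts at `τ = 0`) yields the identity.
-/

open Set Filter Topology
open scoped FourierTransform

noncomputable def cosTransform (f : ℝ → ℝ) (τ : ℝ) : ℝ :=
  ∫ t in Ioi 0, f t * cos (τ * t)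

lemma MeasureTheory.IntegrableOn.integrable_comp_abs {f : ℝ → ℝ} (hf : IntegrableOn f (Ioi 0)) :
    Integrable (fun s => f |s|) := by
  have hIci : Integrable ((Ici 0).indicator f) :=
    (integrable_indicator_iff measurableSet_Ici).2
      (by rwa [integrableOn_Ici_iff_integrableOn_Ioi])
  have hIoi : Integrable ((Ioi 0).indicator f) := (integrable_indicator_iff measurableSet_Ioi).2 hf
  refine (hIci.add hIoi.comp_neg).congr (ae_of_all _ fun s => ?_)
  rcases le_or_gt 0 s with hs | hs
  · simp [hs, abs_of_nonneg hs]
  · simp [hs, hs.not_ge, abs_of_neg hs]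

namespace cosTransform

variable {f : ℝ → ℝ}

lemma neg (f : ℝ → ℝ) (τ : ℝ) : cosTransform f (-τ) = cosTransform f τ := by
  simp only [cosTransform, neg_mul, cos_neg]

lemma integrableOn_mul_cos (hf : IntegrableOn f (Ioi 0)) (τ : ℝ) :
    IntegrableOn (fun t => f t * cos (τ * t)) (Ioi 0) :=
  hf.mul_bdd (c := 1) (by fun_prop : Continuous fun t => cos (τ * t)).aestronglyMeasurable
    (ae_of_all _ fun t => abs_cos_le_one _)

lemma norm_mul_cos_le (f : ℝ → ℝ) (τ t : ℝ) : ‖f t * cos (τ * t)‖ ≤ |f t| := by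
  rw [norm_mul, norm_eq_abs, norm_eq_abs]
  exact mul_le_of_le_one_right (abs_nonneg _) (abs_cos_le_one _)

lemma abs_le (hf : IntegrableOn f (Ioi 0)) (τ : ℝ) :
    |cosTransform f τ| ≤ ∫ t in Ioi 0, |f t| :=
  norm_integral_le_of_norm_le hf.abs <| ae_of_all _ <| norm_mul_cos_le f τ

lemma continuous (hf : IntegrableOn f (Ioi 0)) : Continuous (cosTransform f) :=
  continuous_of_dominated (fun τ => (integrableOn_mul_cos hf τ).1)
    (fun τ => ae_of_all _ <| norm_mul_cos_le f τ) hf.abs (ae_of_all _ fun t => by fun_prop)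

lemma eq_neg_sq_mul_of_hasDerivAt {f' f'' : ℝ → ℝ}
    (hf : ∀ t ∈ Ici (0 : ℝ), HasDerivAt f (f' t) t)
    (hf' : ∀ t ∈ Ici (0 : ℝ), HasDerivAt f' (f'' t) t) (hf'_zero : f' 0 = 0)
    (hf_top : Tendsto f atTop (𝓝 0)) (hf'_top : Tendsto f' atTop (𝓝 0))
    (hf_int : IntegrableOn f (Ioi 0)) (hf''_int : IntegrableOn f'' (Ioi 0)) (τ : ℝ) :
    cosTransform f'' τ = -τ ^ 2 * cosTransform f τ := by
  -- An antiderivative of `(f'' + τ² f) cos (τ ·)` vanishing at `0` and at `∞`.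
  set F : ℝ → ℝ := fun t => f' t * cos (τ * t) + τ * (f t * sin (τ * t))
  have hF : ∀ t ∈ Ici (0 : ℝ),
      HasDerivAt F (f'' t * cos (τ * t) + τ ^ 2 * (f t * cos (τ * t))) t := by
    intro t ht
    have hlin := (hasDerivAt_id t).const_mul τ
    have := ((hf' t ht).mul hlin.cos).add (((hf t ht).mul hlin.sin).const_mul τ)
    exact this.congr_deriv (by simp only [id_eq]; ring)
  have hF_top : Tendsto F atTop (𝓝 0) := by
    refine squeeze_zero_norm (fun t => ?_)
      (by simpa using hf'_top.norm.add (hf_top.norm.const_mul |τ|))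
    calc ‖F t‖ ≤ ‖f' t * cos (τ * t)‖ + ‖τ * (f t * sin (τ * t))‖ := norm_add_le _ _
      _ ≤ ‖f' t‖ + |τ| * ‖f t‖ := by
        simp only [norm_mul, norm_eq_abs]
        gcongr
        · exact mul_le_of_le_one_right (abs_nonneg _) (abs_cos_le_one _)
        · exact mul_le_of_le_one_right (abs_nonneg _) (abs_sin_le_one _)
  have hF_zero : F 0 = 0 := by simp [F, hf'_zero]
  have key := integral_Ioi_of_hasDerivAt_of_tendsto
    (hF 0 self_mem_Ici).continuousAt.continuousWithinAt
    (fun t ht => hF t (Ioi_subset_Ici_self ht))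
    ((integrableOn_mul_cos hf''_int τ).add ((integrableOn_mul_cos hf_int τ).const_mul _)) hF_top
  rw [hF_zero, sub_zero, integral_add (integrableOn_mul_cos hf''_int τ)
    ((integrableOn_mul_cos hf_int τ).const_mul _), integral_const_mul] at key
  rw [cosTransform, cosTransform]
  linarith

lemma integrable_of_eq_neg_sq_mul {f'' : ℝ → ℝ} (hf : IntegrableOn f (Ioi 0))
    (hf'' : IntegrableOn f'' (Ioi 0)) (h : ∀ τ, cosTransform f'' τ = -τ ^ 2 * cosTransform f τ) :
    Integrable (cosTransform f) := by
  set A := ∫ t in Ioi 0, |f t|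
  set B := ∫ t in Ioi 0, |f'' t|
  refine (integrable_inv_one_add_sq.const_mul (A + B)).mono'
    (continuous hf).aestronglyMeasurable (ae_of_all _ fun τ => ?_)
  have hsq : τ ^ 2 * |cosTransform f τ| ≤ B := by
    simpa [h, abs_mul] using abs_le hf'' τ
  rw [norm_eq_abs, ← div_eq_mul_inv, le_div_iff₀ (by positivity)]
  linarith [abs_le hf τ]

lemma integral_cexp_mul_comp_abs (hf : IntegrableOn f (Ioi 0)) (b : ℝ) :
    ∫ s : ℝ, Complex.exp (↑(b * s) * Complex.I) * ↑(f |s|) = ↑(2 * cosTransform f b) := by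
  set F : ℝ → ℂ := fun s => Complex.exp (↑(b * s) * Complex.I) * ↑(f |s|)
  have hF : Integrable F := hf.integrable_comp_abs.ofReal.bdd_mul (c := 1) (by fun_prop)
    (ae_of_all _ fun s => (Complex.norm_exp_ofReal_mul_I _).le)
  have hF_sym : ∀ s, F s + F (-s) = ↑(2 * (f |s| * cos (b * |s|))) := by
    intro s
    have hcos : cos (b * |s|) = cos (b * s) := by
      rcases abs_choice s with h | h <;> simp [h, mul_neg]
    simp only [F, hcos, abs_neg, mul_neg, Complex.ofReal_neg, Complex.ofReal_mul,
      Complex.ofReal_ofNat, Complex.ofReal_cos]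
    linear_combination -(f |s| : ℂ) * Complex.two_cos (b * s)
  have h2 : 2 * ∫ s, F s = ∫ s, (F s + F (-s)) := by
    rw [integral_add hF hF.comp_neg, integral_neg_eq_self, two_mul]
  rw [← mul_right_inj' (two_ne_zero (α := ℂ)), h2]
  simp_rw [hF_sym]
  rw [integral_complex_ofReal, integral_const_mul,
    integral_comp_abs (f := fun u => f u * cos (b * u))]
  push_cast
  rfl

lemma fourier_comp_abs (hf : IntegrableOn f (Ioi 0)) (ξ : ℝ) :
    𝓕 (fun s : ℝ => (f |s| : ℂ)) ξ = ↑(2 * cosTransform f (2 * π * ξ)) := by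
  rw [Real.fourier_eq', ← neg f, ← integral_cexp_mul_comp_abs hf]
  congr 1
  ext s
  simp only [smul_eq_mul, RCLike.inner_apply, conj_trivial]
  push_cast
  ring_nf

lemma fourierInv_comp_abs (hf : IntegrableOn f (Ioi 0)) (t : ℝ) :
    𝓕⁻ (fun s : ℝ => (f |s| : ℂ)) t = ↑(2 * cosTransform f (2 * π * t)) := by
  rw [Real.fourierInv_eq', ← integral_cexp_mul_comp_abs hf]
  congr 1
  ext s
  simp only [smul_eq_mul, RCLike.inner_apply, conj_trivial]
  push_cast
  ring_nf

theorem cosTransform_cosTransform (hf : Continuous f) (hfi : IntegrableOn f (Ioi 0))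
    (hFi : IntegrableOn (cosTransform f) (Ioi 0)) {t : ℝ} (ht : 0 ≤ t) :
    cosTransform (cosTransform f) t = π / 2 * f t := by
  -- Fourier inversion for the even extension `s ↦ f |s|`, whose Fourier transform is `h |·|`.
  set h : ℝ → ℝ := fun u => 2 * cosTransform f (2 * π * u)
  have hh : IntegrableOn h (Ioi 0) := by
    have := (integrableOn_Ioi_comp_mul_left_iff (cosTransform f) 0 (a := 2 * π)
      (by positivity)).2 (by simpa using hFi)
    exact this.const_mul 2
  have hfourier : 𝓕 (fun s : ℝ => (f |s| : ℂ)) = fun ξ => ↑(h |ξ|) := by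
    ext ξ
    rw [fourier_comp_abs hfi]
    rcases abs_choice ξ with hξ | hξ <;> simp [h, hξ, neg]
  have hinv := hfi.integrable_comp_abs.ofReal.fourierInv_fourier_eq
    (hfourier ▸ hh.integrable_comp_abs.ofReal)
    (by fun_prop : Continuous fun s => (f |s| : ℂ)).continuousAt (v := t)
  rw [hfourier, fourierInv_comp_abs hh, abs_of_nonneg ht, Complex.ofReal_inj] at hinv
  have hscale :
      cosTransform h (2 * π * t) = 2 * (2 * π)⁻¹ * cosTransform (cosTransform f) t := by
    have := integral_comp_mul_left_Ioi (fun τ => cosTransform f τ * cos (t * τ)) 0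
      (by positivity : 0 < 2 * π)
    simp only [mul_zero, smul_eq_mul] at this
    rw [cosTransform, cosTransform, mul_assoc 2 (2 * π)⁻¹, ← this, ← integral_const_mul]
    congr 1
    ext u
    simp only [h]
    ring_nf
  rw [hscale] at hinv
  field_simp at hinv
  linarith

theorem integral_mul_cosTransform {w : ℝ → ℝ} (hw : IntegrableOn w (Ioi 0)) (hf : Continuous f)
    (hfi : IntegrableOn f (Ioi 0)) (hFi : IntegrableOn (cosTransform f) (Ioi 0)) :
    ∫ τ in Ioi 0, cosTransform w τ * cosTransform f τ = π / 2 * ∫ t in Ioi 0, w t * f t := by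
  have hprod : Integrable (Function.uncurry fun τ t => cosTransform f τ * w t * cos (τ * t))
      ((volume.restrict (Ioi 0)).prod (volume.restrict (Ioi 0))) :=
    (hFi.mul_prod hw).mul_bdd (c := 1)
      (by fun_prop : Continuous fun z : ℝ × ℝ => cos (z.1 * z.2)).aestronglyMeasurable
      (ae_of_all _ fun z => abs_cos_le_one _)
  calc ∫ τ in Ioi 0, cosTransform w τ * cosTransform f τ
      = ∫ τ in Ioi 0, ∫ t in Ioi 0, cosTransform f τ * w t * cos (τ * t) := by
        congr 1
        ext τ
        rw [cosTransform, mul_comm, ← integral_const_mul]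
        simp only [mul_assoc]
    _ = ∫ t in Ioi 0, ∫ τ in Ioi 0, cosTransform f τ * w t * cos (τ * t) :=
        integral_integral_swap hprod
    _ = ∫ t in Ioi 0, w t * (π / 2 * f t) := by
        refine setIntegral_congr_fun measurableSet_Ioi fun t ht => ?_
        rw [← cosTransform_cosTransform hf hfi hFi ht.le, cosTransform, ← integral_const_mul]
        congr 1
        ext τ
        ring_nf
    _ = π / 2 * ∫ t in Ioi 0, w t * f t := by
        rw [← integral_const_mul]
        congr 1
        ext t
        ring

end cosTransform

namespace Real

lemma sq_div_two_le_cosh (t : ℝ) : t ^ 2 / 2 ≤ cosh t := by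
  simpa using le_hasSum (hasSum_cosh t) 1 fun n _ =>
    div_nonneg ((even_two_mul n).pow_nonneg t) (Nat.cast_nonneg _)

lemma tendsto_cosh_atTop : Tendsto cosh atTop atTop :=
  tendsto_atTop_mono sq_div_two_le_cosh
    ((tendsto_pow_atTop two_ne_zero).atTop_div_const two_pos)

lemma abs_sinh_le_cosh (t : ℝ) : |sinh t| ≤ cosh t := by
  rw [abs_sinh, ← cosh_abs]
  exact (sinh_lt_cosh _).le

lemma cosh_pow_le_exp_mul {t : ℝ} (ht : 0 ≤ t) (n : ℕ) : cosh t ^ n ≤ exp (n * t) := by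
  rw [exp_nat_mul]
  gcongr
  rw [cosh_eq]
  linarith [exp_le_exp.2 (neg_le_self ht)]

end Real

lemma Kit_eq_cosTransform (τ x : ℝ) : Kit τ x = cosTransform (fun t => exp (-x * cosh t)) τ :=
  rfl

section exp_neg_mul_cosh

variable {x : ℝ}

lemma integrableOn_mul_exp_neg_mul_cosh (hx : 0 < x) {P : ℝ → ℝ} (hP : Continuous P) {C : ℝ}
    {n : ℕ} (hPC : ∀ t, |P t| ≤ C * cosh t ^ n) :
    IntegrableOn (fun t => P t * exp (-x * cosh t)) (Ioi 0) := by
  have hC : 0 ≤ C :=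
    nonneg_of_mul_nonneg_left ((abs_nonneg _).trans (hPC 0)) (pow_pos (cosh_pos 0) n)
  refine integrable_of_isBigO_exp_neg one_pos (by fun_prop : Continuous _).continuousOn
    (Asymptotics.IsBigO.of_bound C ?_)
  filter_upwards [eventually_ge_atTop (2 * (n + 1) / x), eventually_ge_atTop 0] with t ht ht0
  -- `x cosh t ≥ x t² / 2 ≥ (n + 1) t` once `t ≥ 2 (n + 1) / x`
  have hexp : n * t - x * cosh t ≤ -1 * t := by
    rw [div_le_iff₀ hx] at ht
    nlinarith [sq_div_two_le_cosh t]
  calc ‖P t * exp (-x * cosh t)‖ = |P t| * exp (-x * cosh t) := by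
        rw [norm_mul, norm_eq_abs, norm_of_nonneg (exp_pos _).le]
    _ ≤ C * exp (n * t) * exp (-x * cosh t) := by
        gcongr
        exact (hPC t).trans (by gcongr; exact cosh_pow_le_exp_mul ht0 n)
    _ ≤ C * ‖exp (-1 * t)‖ := by
        rw [norm_of_nonneg (exp_pos _).le, mul_assoc, ← exp_add]
        gcongr
        linarith

lemma integrableOn_exp_neg_mul_cosh (hx : 0 < x) :
    IntegrableOn (fun t => exp (-x * cosh t)) (Ioi 0) := by
  simpa using integrableOn_mul_exp_neg_mul_cosh hx continuous_const (P := fun _ => 1) (C := 1)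
    (n := 0) fun t => by simp

lemma integrableOn_cosh_mul_exp_neg_mul_cosh (hx : 0 < x) :
    IntegrableOn (fun t => cosh t * exp (-x * cosh t)) (Ioi 0) :=
  integrableOn_mul_exp_neg_mul_cosh hx continuous_cosh (C := 1) (n := 1)
    fun t => by simp [abs_of_pos (cosh_pos t)]

lemma integrableOn_sinh_sq_mul_exp_neg_mul_cosh (hx : 0 < x) :
    IntegrableOn (fun t => sinh t ^ 2 * exp (-x * cosh t)) (Ioi 0) :=
  integrableOn_mul_exp_neg_mul_cosh hx (by fun_prop) (C := 1) (n := 2)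
    fun t => by simp [cosh_sq]

lemma integrableOn_deriv_deriv_exp_neg_mul_cosh (hx : 0 < x) :
    IntegrableOn (fun t => (x ^ 2 * sinh t ^ 2 - x * cosh t) * exp (-x * cosh t)) (Ioi 0) :=
  integrableOn_mul_exp_neg_mul_cosh hx (by fun_prop) (C := x ^ 2 + x) (n := 2) fun t => by
    have h1 := one_le_cosh t
    have h2 := cosh_sq t
    rw [abs_le]
    have h3 : 0 ≤ x * cosh t * (cosh t - 1) := by
      have := cosh_pos t
      have : 0 ≤ cosh t - 1 := by linarith
      positivity
    constructor <;> nlinarith [sq_nonneg (x * sinh t), sq_nonneg (x * cosh t)]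

lemma hasDerivAt_exp_neg_mul_cosh (x t : ℝ) :
    HasDerivAt (fun t => exp (-x * cosh t)) (-x * sinh t * exp (-x * cosh t)) t :=
  (((hasDerivAt_cosh t).const_mul (-x)).exp).congr_deriv (by ring)

lemma hasDerivAt_deriv_exp_neg_mul_cosh (x t : ℝ) :
    HasDerivAt (fun t => -x * sinh t * exp (-x * cosh t))
      ((x ^ 2 * sinh t ^ 2 - x * cosh t) * exp (-x * cosh t)) t :=
  (((hasDerivAt_sinh t).const_mul (-x)).mul (hasDerivAt_exp_neg_mul_cosh x t)).congr_deriv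
    (by ring)

lemma tendsto_cosh_mul_exp_neg_mul_cosh (hx : 0 < x) :
    Tendsto (fun t => cosh t * exp (-x * cosh t)) atTop (𝓝 0) := by
  simpa [Function.comp_def] using
    (tendsto_rpow_mul_exp_neg_mul_atTop_nhds_zero 1 x hx).comp tendsto_cosh_atTop

lemma cosTransform_deriv_deriv_exp_neg_mul_cosh (hx : 0 < x) (τ : ℝ) :
    cosTransform (fun t => (x ^ 2 * sinh t ^ 2 - x * cosh t) * exp (-x * cosh t)) τ
      = -τ ^ 2 * Kit τ x := by
  have hdecay := tendsto_cosh_mul_exp_neg_mul_cosh hx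
  refine cosTransform.eq_neg_sq_mul_of_hasDerivAt (fun t _ => hasDerivAt_exp_neg_mul_cosh x t)
    (fun t _ => hasDerivAt_deriv_exp_neg_mul_cosh x t) (by simp) ?_ ?_
    (integrableOn_exp_neg_mul_cosh hx) (integrableOn_deriv_deriv_exp_neg_mul_cosh hx) τ
  · refine squeeze_zero_norm (fun t => ?_) hdecay
    rw [norm_of_nonneg (exp_pos _).le]
    exact le_mul_of_one_le_left (exp_pos _).le (one_le_cosh t)
  · refine squeeze_zero_norm (fun t => ?_) (by simpa only [mul_zero] using hdecay.const_mul x)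
    rw [norm_mul, norm_mul, norm_neg, norm_of_nonneg (exp_pos _).le, norm_of_nonneg hx.le,
      norm_eq_abs, mul_assoc]
    gcongr
    exact abs_sinh_le_cosh t

lemma integrableOn_Kit (hx : 0 < x) : IntegrableOn (fun τ => Kit τ x) (Ioi 0) :=
  (cosTransform.integrable_of_eq_neg_sq_mul (integrableOn_exp_neg_mul_cosh hx)
    (integrableOn_deriv_deriv_exp_neg_mul_cosh hx)
    (cosTransform_deriv_deriv_exp_neg_mul_cosh hx)).integrableOn

lemma integral_cosTransform_mul_Kit (hx : 0 < x) {w : ℝ → ℝ} (hw : IntegrableOn w (Ioi 0)) :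
    ∫ τ in Ioi 0, cosTransform w τ * Kit τ x = π / 2 * ∫ t in Ioi 0, w t * exp (-x * cosh t) :=
  cosTransform.integral_mul_cosTransform hw (by fun_prop) (integrableOn_exp_neg_mul_cosh hx)
    (integrableOn_Kit hx)

lemma exp_neg_mul_cosh_mul_self (x t : ℝ) :
    exp (-x * cosh t) * exp (-x * cosh t) = exp (-(2 * x) * cosh t) := by
  rw [← exp_add]
  ring_nf

lemma integral_cosh_mul_exp_neg_mul_cosh (hx : 0 < x) :
    ∫ t in Ioi 0, cosh t * exp (-x * cosh t)
      = x * ∫ t in Ioi 0, sinh t ^ 2 * exp (-x * cosh t) := by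
  have h := cosTransform_deriv_deriv_exp_neg_mul_cosh hx 0
  simp only [cosTransform, zero_mul, cos_zero, mul_one, ne_eq, OfNat.ofNat_ne_zero,
    not_false_eq_true, zero_pow, neg_zero] at h
  simp_rw [sub_mul, mul_assoc] at h
  rw [integral_sub ((integrableOn_sinh_sq_mul_exp_neg_mul_cosh hx).const_mul _)
    ((integrableOn_cosh_mul_exp_neg_mul_cosh hx).const_mul _), integral_const_mul,
    integral_const_mul] at h
  have h' : x * ((x * ∫ t in Ioi 0, sinh t ^ 2 * exp (-x * cosh t))
      - ∫ t in Ioi 0, cosh t * exp (-x * cosh t)) = 0 := by linear_combination h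
  linarith [(mul_eq_zero.1 h').resolve_left hx.ne']

lemma μ_zero_eq_integral (hx : 0 < x) : μ 0 x = π / 2 * ∫ t in Ioi 0, exp (-(2 * x) * cosh t) := by
  have h := integral_cosTransform_mul_Kit hx (integrableOn_exp_neg_mul_cosh hx)
  simp only [← Kit_eq_cosTransform, exp_neg_mul_cosh_mul_self] at h
  simpa [μ, sq] using h

lemma μ_one_eq_integral (hx : 0 < x) :
    μ 1 x = π / 2 * ((x * ∫ t in Ioi 0, cosh t * exp (-(2 * x) * cosh t))
      - x ^ 2 * ∫ t in Ioi 0, sinh t ^ 2 * exp (-(2 * x) * cosh t)) := by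
  have h := integral_cosTransform_mul_Kit hx (integrableOn_deriv_deriv_exp_neg_mul_cosh hx)
  have hsplit : ∫ t in Ioi 0, (x ^ 2 * sinh t ^ 2 - x * cosh t) * exp (-x * cosh t)
        * exp (-x * cosh t)
      = x ^ 2 * (∫ t in Ioi 0, sinh t ^ 2 * exp (-(2 * x) * cosh t))
        - x * ∫ t in Ioi 0, cosh t * exp (-(2 * x) * cosh t) := by
    rw [← integral_const_mul, ← integral_const_mul, ← integral_sub
      ((integrableOn_sinh_sq_mul_exp_neg_mul_cosh (by positivity)).const_mul _)
      ((integrableOn_cosh_mul_exp_neg_mul_cosh (by positivity)).const_mul _)]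
    congr 1
    ext t
    rw [← exp_neg_mul_cosh_mul_self]
    ring
  simp only [cosTransform_deriv_deriv_exp_neg_mul_cosh hx, hsplit] at h
  have hμ : μ 1 x = -∫ τ in Ioi 0, -τ ^ 2 * Kit τ x * Kit τ x := by
    rw [μ, ← integral_neg]
    congr 1
    ext τ
    ring
  rw [hμ, h]
  ring

lemma hasDerivAt_integral_exp_neg_mul_cosh (hx : 0 < x) :
    HasDerivAt (fun y => ∫ t in Ioi 0, exp (-y * cosh t))
      (-∫ t in Ioi 0, cosh t * exp (-x * cosh t)) x := by
  rw [← integral_neg]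
  refine (hasDerivAt_integral_of_dominated_loc_of_deriv_le
    (Metric.ball_mem_nhds x (half_pos hx))
    (μ := volume.restrict (Ioi 0)) (F := fun y t => exp (-y * cosh t))
    (F' := fun y t => -(cosh t * exp (-y * cosh t)))
    (bound := fun t => cosh t * exp (-(x / 2) * cosh t))
    (Eventually.of_forall fun y => (by fun_prop : Continuous _).aestronglyMeasurable)
    (integrableOn_exp_neg_mul_cosh hx) (by fun_prop : Continuous _).aestronglyMeasurable
    (ae_of_all _ fun t y hy => ?_) (integrableOn_cosh_mul_exp_neg_mul_cosh (half_pos hx))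
    (ae_of_all _ fun t y _ => ?_)).2
  · have hy' : x / 2 < y := by
      have := abs_lt.1 (Metric.mem_ball.1 hy)
      linarith [this.1]
    rw [norm_neg, norm_of_nonneg (by positivity)]
    gcongr
  · exact ((hasDerivAt_neg y).mul_const (cosh t)).exp.congr_deriv (by ring)

lemma hasDerivAt_μ_zero (hx : 0 < x) :
    HasDerivAt (μ 0) (-π * ∫ t in Ioi 0, cosh t * exp (-(2 * x) * cosh t)) x := by
  have h := ((hasDerivAt_integral_exp_neg_mul_cosh (by positivity : 0 < 2 * x)).comp x
    ((hasDerivAt_id x).const_mul 2)).const_mul (π / 2)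
  refine (h.congr_deriv (by ring)).congr_of_eventuallyEq ?_
  filter_upwards [Ioi_mem_nhds hx] with y hy
  exact μ_zero_eq_integral hy

end exp_neg_mul_cosh

theorem x_mul_deriv_mu_zero (x : ℝ) (hx : 0 < x) :
    x * deriv (μ 0) x = -4 * μ 1 x := by
  rw [(hasDerivAt_μ_zero hx).deriv, μ_one_eq_integral hx,
    integral_cosh_mul_exp_neg_mul_cosh (by positivity : 0 < 2 * x)]
  ring
end
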